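/- For a standard Gaussian random vector z in ℝ^d and any real p ≥ 2, E[‖z‖^p] ≤ (d + p)^{p/2}. -/

import Mathlib

/-!
For `t ≥ 0` and `l > 0`, maximizing `t ^ q * exp (-l * t)` gives
`t ^ q ≤ (q / (e * l)) ^ q * exp (l * t)`; with `t = ‖z‖²`, `q = p / 2` and
`E[exp (l * ‖z‖²)] = (1 - 2 * l) ^ (-d / 2)` this bounds the moment by
`(p / (2 * e * l)) ^ (p / 2) * (1 - 2 * l) ^ (-d / 2)`. The choice `l = p / (2 * (d + p))` turns
this into `((d + p) / e) ^ (p / 2) * (1 + p / d) ^ (d / 2)`, and `(1 + p / d) ^ (d / 2) ≤ e ^ (p / 2)`.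
-/

open MeasureTheory ProbabilityTheory Real
open scoped NNReal

lemma gaussianPDFReal_zero_mul_exp_mul_sq {v : ℝ≥0} (hv : v ≠ 0) (l x : ℝ) :
    gaussianPDFReal 0 v x * exp (l * x ^ 2)
      = (√(2 * π * v))⁻¹ * exp (-((1 - 2 * l * v) / (2 * v)) * x ^ 2) := by
  rw [gaussianPDFReal, mul_assoc, ← exp_add]
  field_simp
  ring_nf

lemma integrable_exp_mul_sq_gaussianReal {v : ℝ≥0} {l : ℝ} (hl : l * v < 1 / 2) :
    Integrable (fun x ↦ exp (l * x ^ 2)) (gaussianReal 0 v) := by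
  rcases eq_or_ne v 0 with rfl | hv
  · rw [gaussianReal_zero_var]
    exact integrable_dirac (by simp)
  rw [gaussianReal_of_var_ne_zero _ hv, integrable_withDensity_iff_integrable_smul'
    (measurable_gaussianPDF 0 v) (ae_of_all _ fun _ ↦ gaussianPDF_lt_top)]
  simp_rw [toReal_gaussianPDF, smul_eq_mul, gaussianPDFReal_zero_mul_exp_mul_sq hv]
  have : 0 < (v : ℝ) := by positivity
  exact (integrable_exp_neg_mul_sq (div_pos (by linarith) (by positivity))).const_mul _

lemma integral_exp_mul_sq_gaussianReal {v : ℝ≥0} {l : ℝ} (hl : l * v < 1 / 2) :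
    ∫ x, exp (l * x ^ 2) ∂gaussianReal 0 v = (1 - 2 * l * v) ^ (-(1 / 2 : ℝ)) := by
  rcases eq_or_ne v 0 with rfl | hv
  · simp [gaussianReal_zero_var]
  have : 0 < (v : ℝ) := by positivity
  simp_rw [integral_gaussianReal_eq_integral_smul hv, smul_eq_mul,
    gaussianPDFReal_zero_mul_exp_mul_sq hv, integral_const_mul, integral_gaussian]
  rw [rpow_neg (by linarith), ← sqrt_eq_rpow, ← sqrt_inv, ← sqrt_inv, ← sqrt_mul (by positivity)]
  congr 1
  field_simp

lemma rpow_le_mul_exp {t q l : ℝ} (ht : 0 ≤ t) (hq : 0 < q) (hl : 0 < l) :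
    t ^ q ≤ (q / (exp 1 * l)) ^ q * exp (l * t) := by
  have hu : l * t / q ≤ exp (l * t / q - 1) := by linarith [add_one_le_exp (l * t / q - 1)]
  calc t ^ q = (q / l) ^ q * (l * t / q) ^ q := by
        rw [← mul_rpow (by positivity) (by positivity)]
        congr 1
        field_simp
    _ ≤ (q / l) ^ q * exp (l * t / q - 1) ^ q := by gcongr
    _ = (q / (exp 1 * l)) ^ q * exp (l * t) := by
        rw [← exp_mul, sub_mul, div_mul_cancel₀ _ hq.ne', exp_sub, one_mul, mul_comm (exp 1),
          ← div_div, div_rpow (by positivity) (exp_pos 1).le, exp_one_rpow]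
        ring

lemma one_add_div_rpow_le_exp {x D : ℝ} (hx : 0 ≤ x) (hD : 0 < D) :
    (1 + x / D) ^ D ≤ exp x := by
  calc (1 + x / D) ^ D ≤ exp (x / D) ^ D := by
        gcongr
        linarith [add_one_le_exp (x / D)]
    _ = exp x := by rw [← exp_mul, div_mul_cancel₀ _ hD.ne']

lemma integral_sqrt_sum_sq_rpow_le {ι : Type*} [Fintype ι] {v : ℝ≥0} {p l : ℝ} (hp : 0 < p)
    (hl : 0 < l) (hlv : l * v < 1 / 2) :
    ∫ z : ι → ℝ, √(∑ i, z i ^ 2) ^ p ∂(Measure.pi fun _ ↦ gaussianReal 0 v)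
      ≤ (p / 2 / (exp 1 * l)) ^ (p / 2) * (1 - 2 * l * v) ^ (-(Fintype.card ι / 2 : ℝ)) := by
  set C := (p / 2 / (exp 1 * l)) ^ (p / 2)
  have hpoint (z : ι → ℝ) : √(∑ i, z i ^ 2) ^ p ≤ C * ∏ i, exp (l * z i ^ 2) := by
    rw [← exp_sum, ← Finset.mul_sum, sqrt_eq_rpow, ← rpow_mul (by positivity), one_div_mul_eq_div]
    exact rpow_le_mul_exp (by positivity) (by positivity) hl
  calc _ ≤ ∫ z : ι → ℝ, C * ∏ i, exp (l * z i ^ 2) ∂(Measure.pi fun _ ↦ gaussianReal 0 v) :=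
        integral_mono_of_nonneg (ae_of_all _ fun z ↦ by positivity)
          ((Integrable.fintype_prod fun _ ↦ integrable_exp_mul_sq_gaussianReal hlv).const_mul C)
          (ae_of_all _ hpoint)
    _ = C * (1 - 2 * l * v) ^ (-(Fintype.card ι / 2 : ℝ)) := by
        rw [integral_const_mul, integral_fintype_prod_eq_pow (fun x ↦ exp (l * x ^ 2)),
          integral_exp_mul_sq_gaussianReal hlv, ← rpow_natCast, ← rpow_mul (by linarith)]
        ring_nf

lemma integral_sqrt_sum_sq_rpow_le_add_rpow {ι : Type*} [Fintype ι] {p : ℝ} (hp : 0 < p) :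
    ∫ z : ι → ℝ, √(∑ i, z i ^ 2) ^ p ∂(Measure.pi fun _ ↦ gaussianReal 0 1)
      ≤ (Fintype.card ι + p) ^ (p / 2) := by
  rcases isEmpty_or_nonempty ι with _ | _
  · simp only [Finset.univ_eq_empty, Finset.sum_empty, sqrt_zero, zero_rpow hp.ne', integral_zero]
    positivity
  set D : ℝ := (Fintype.card ι : ℝ)
  have hD : 0 < D := by positivity
  set l := p / (2 * (D + p))
  have hl : 0 < l := by positivity
  have hl2 : l * (1 : ℝ≥0) < 1 / 2 := by
    rw [NNReal.coe_one, mul_one, div_lt_div_iff₀ (by positivity) two_pos]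
    linarith
  refine (integral_sqrt_sum_sq_rpow_le hp hl hl2).trans ?_
  have h1 : p / 2 / (exp 1 * l) = (D + p) / exp 1 := by
    simp only [l]
    field_simp
  have h2 : 1 - 2 * l * (1 : ℝ≥0) = (1 + p / D)⁻¹ := by
    simp only [l, NNReal.coe_one]
    field_simp
    ring
  calc _ = ((D + p) / exp 1) ^ (p / 2) * (1 + p / D) ^ (D / 2) := by
        rw [h1, h2, rpow_neg (by positivity), inv_rpow (by positivity), inv_inv]
    _ ≤ ((D + p) / exp 1) ^ (p / 2) * exp (p / 2) := by
        gcongr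
        simpa only [div_div_div_cancel_right₀ (two_ne_zero (α := ℝ))] using
          one_add_div_rpow_le_exp (x := p / 2) (D := D / 2) (by positivity) (by positivity)
    _ = (D + p) ^ (p / 2) := by
        rw [div_rpow (by positivity) (exp_pos 1).le, exp_one_rpow, div_mul_cancel₀ _ (exp_pos _).ne']

theorem stmt_9 (d : ℕ) (p : ℝ) (hp : 2 ≤ p) :
    ∫ z : Fin d → ℝ, (Real.sqrt (∑ i, (z i) ^ 2)) ^ p
        ∂(Measure.pi fun _ : Fin d => gaussianReal 0 1)
      ≤ ((d : ℝ) + p) ^ (p / 2) := by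
  simpa only [Fintype.card_fin] using
    integral_sqrt_sum_sq_rpow_le_add_rpow (ι := Fin d) (by linarith : (0 : ℝ) < p)
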